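/- arXiv:2302.12905 — 4 statements merged into one kernel-verified Lean document; each statement's English description precedes it below -/
import Mathlib

section
/- A short exact sequence of R-modules is pure if and only if its character sequence (obtained by applying Hom_ℤ(−, ℚ/ℤ)) is a split short exact sequence of right R-modules. -/
universe u

open CategoryTheory TensorProduct

namespace GorensteinPaper

variable (R : Type u) [CommRing R]

/-- `i`, `p` form a short exact sequence `0 → A → B → C → 0` of `R`-modules. -/
def IsSES {A B C : ModuleCat.{u} R} (i : A ⟶ B) (p : B ⟶ C) : Prop :=
  Function.Injective i ∧ Function.Surjective p ∧ Function.Exact i p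

/-- `Ext¹_R(G, M) = 0`. -/
def Ext1Zero (G M : ModuleCat.{u} R) : Prop :=
  Subsingleton (((Ext R (ModuleCat.{u} R) 1).obj (Opposite.op G)).obj M)

/-- `Tor_n^R(E, N) = 0`. -/
def TorZero (n : ℕ) (E N : ModuleCat.{u} R) : Prop :=
  Limits.IsZero (((Tor (ModuleCat.{u} R) n).obj E).obj N)

/-- `M` is projectively coresolved Gorenstein flat (PGF): it is a syzygy of an exact
complex of projective modules which stays exact after tensoring with any injective module. -/
def IsPGF (M : ModuleCat.{u} R) : Prop :=
  ∃ (P : ℤ → ModuleCat.{u} R) (d : ∀ i : ℤ, P (i + 1) ⟶ P i),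
    (∀ i, Module.Projective R (P i)) ∧
    (∀ i : ℤ, Function.Exact (d (i + 1)) (d i)) ∧
    (∀ (E : ModuleCat.{u} R), Module.Injective R E →
      ∀ i : ℤ, Function.Exact (LinearMap.lTensor E (d (i + 1)).hom) (LinearMap.lTensor E (d i).hom)) ∧
    Nonempty (M ≃ₗ[R] LinearMap.range (d 0).hom)

/-- `M` is Gorenstein flat: it is a syzygy of an exact complex of flat modules which
stays exact after tensoring with any injective module. -/
def IsGF (M : ModuleCat.{u} R) : Prop :=
  ∃ (P : ℤ → ModuleCat.{u} R) (d : ∀ i : ℤ, P (i + 1) ⟶ P i),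
    (∀ i, Module.Flat R (P i)) ∧
    (∀ i : ℤ, Function.Exact (d (i + 1)) (d i)) ∧
    (∀ (E : ModuleCat.{u} R), Module.Injective R E →
      ∀ i : ℤ, Function.Exact (LinearMap.lTensor E (d (i + 1)).hom) (LinearMap.lTensor E (d i).hom)) ∧
    Nonempty (M ≃ₗ[R] LinearMap.range (d 0).hom)

/-- `M` is Gorenstein projective: a syzygy of a `Hom(-, projective)`-exact exact complex of
projective modules. -/
def IsGorensteinProjective (M : ModuleCat.{u} R) : Prop :=
  ∃ (P : ℤ → ModuleCat.{u} R) (d : ∀ i : ℤ, P (i + 1) ⟶ P i),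
    (∀ i, Module.Projective R (P i)) ∧
    (∀ i : ℤ, Function.Exact (d (i + 1)) (d i)) ∧
    (∀ (Q : ModuleCat.{u} R), Module.Projective R Q →
      ∀ i : ℤ, Function.Exact (LinearMap.lcomp R Q (d i).hom) (LinearMap.lcomp R Q (d (i + 1)).hom)) ∧
    Nonempty (M ≃ₗ[R] LinearMap.range (d 0).hom)

/-- `M` is Ding projective: a syzygy of a `Hom(-, flat)`-exact exact complex of
projective modules. -/
def IsDingProjective (M : ModuleCat.{u} R) : Prop :=
  ∃ (P : ℤ → ModuleCat.{u} R) (d : ∀ i : ℤ, P (i + 1) ⟶ P i),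
    (∀ i, Module.Projective R (P i)) ∧
    (∀ i : ℤ, Function.Exact (d (i + 1)) (d i)) ∧
    (∀ (Q : ModuleCat.{u} R), Module.Flat R Q →
      ∀ i : ℤ, Function.Exact (LinearMap.lcomp R Q (d i).hom) (LinearMap.lcomp R Q (d (i + 1)).hom)) ∧
    Nonempty (M ≃ₗ[R] LinearMap.range (d 0).hom)

/-- Resolution dimension of `M` with respect to a class `C` is at most `n`. -/
def ResDimLE (C : ModuleCat.{u} R → Prop) : ℕ → ModuleCat.{u} R → Prop
  | 0, M => C M
  | n + 1, M => ResDimLE C n M ∨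
      ∃ (K F : ModuleCat.{u} R) (i : K ⟶ F) (p : F ⟶ M),
        IsSES R i p ∧ C F ∧ ResDimLE C n K

/-- flat dimension at most `n`. -/
def FdLE (n : ℕ) (M : ModuleCat.{u} R) : Prop :=
  ResDimLE R (fun N => Module.Flat R N) n M

/-- projective dimension at most `n`. -/
def PdLE (n : ℕ) (M : ModuleCat.{u} R) : Prop :=
  ResDimLE R (fun N => Module.Projective R N) n M

/-- Gorenstein flat dimension at most `n`. -/
def GfdLE (n : ℕ) (M : ModuleCat.{u} R) : Prop :=
  ResDimLE R (IsGF R) n M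

/-- PGF dimension at most `n`. -/
def PGFdLE (n : ℕ) (M : ModuleCat.{u} R) : Prop :=
  ResDimLE R (IsPGF R) n M

/-- `M` lies in the right `Ext`-orthogonal class of the PGF modules. -/
def InPGFPerp (M : ModuleCat.{u} R) : Prop :=
  ∀ G : ModuleCat.{u} R, IsPGF R G → Ext1Zero R G M

/-- `i`, `p` form a pure short exact sequence. -/
def IsPureSES {A B C : ModuleCat.{u} R} (i : A ⟶ B) (p : B ⟶ C) : Prop :=
  IsSES R i p ∧ ∀ X : ModuleCat.{u} R, Function.Injective (LinearMap.lTensor X i.hom)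


/-!
Characters detect injectivity, and `Hom(M, N⁺) ≅ (M ⊗ N)⁺ ≅ Hom(N, M⁺)`. Under this flip,
injectivity of `i ⊗ X` becomes surjectivity of `Hom(X, B⁺) → Hom(X, A⁺)`, `h ↦ i⁺ ∘ h`; for all
`X` at once this says exactly that `i⁺` splits (take `X = A⁺` and `h = id`). Exactness of the
character sequence needs no purity, since `ℚ/ℤ` is an injective abelian group.
-/

end GorensteinPaper

namespace CharacterModule

variable {R : Type*} [CommRing R] {A B C : Type*} [AddCommGroup A] [AddCommGroup B]
  [AddCommGroup C] [Module R A] [Module R B] [Module R C]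

theorem dual_exact {f : A →ₗ[R] B} {g : B →ₗ[R] C} (h : Function.Exact f g) :
    Function.Exact (dual g) (dual f) := by
  intro c
  constructor
  · intro hc
    -- `c` kills `ker g = range f`, so it factors through `range g`; then extend it to `C`,
    -- `ℚ/ℤ` being injective.
    have hker : g.rangeRestrict.toAddMonoidHom.ker ≤ AddMonoidHom.ker c := by
      intro b hb
      obtain ⟨a, rfl⟩ := (h b).1 (congr_arg Subtype.val hb)
      exact congr($hc a)
    obtain ⟨d, hd⟩ := dual_surjective_of_injective _ (LinearMap.range g).injective_subtype
      (g.rangeRestrict.toAddMonoidHom.liftOfSurjective g.surjective_rangeRestrict ⟨c, hker⟩)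
    refine ⟨d, DFunLike.ext _ _ fun b => ?_⟩
    exact congr($hd (g.rangeRestrict b)).trans
      (AddMonoidHom.liftOfRightInverse_comp_apply _ _ _ ⟨c, hker⟩ b)
  · rintro ⟨d, rfl⟩
    ext a
    exact congr_arg d (h.apply_apply_eq_zero a) |>.trans (map_zero d)

section homFlip

variable {M N : Type*} [AddCommGroup M] [AddCommGroup N] [Module R M] [Module R N]

noncomputable def homFlip :
    (M →ₗ[R] CharacterModule N) ≃ₗ[R] (N →ₗ[R] CharacterModule M) :=
  homEquiv ≪≫ₗ congr (TensorProduct.comm R M N) ≪≫ₗ homEquiv.symm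

theorem homFlip_comp (f : A →ₗ[R] B) (g : B →ₗ[R] CharacterModule N) :
    homFlip (g ∘ₗ f) = dual f ∘ₗ homFlip g :=
  rfl

end homFlip

theorem rTensor_injective_iff_dual_comp_surjective (f : A →ₗ[R] B) (X : Type*)
    [AddCommGroup X] [Module R X] :
    Function.Injective (f.rTensor X) ↔
      Function.Surjective fun h : X →ₗ[R] CharacterModule B => dual f ∘ₗ h := by
  have hconj : ⇑(f.lcomp R (CharacterModule X)) =
      homFlip.symm ∘ (fun h : X →ₗ[R] CharacterModule B => dual f ∘ₗ h) ∘ homFlip := by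
    ext g : 1
    exact (homFlip.symm_apply_eq.2 (homFlip_comp f g).symm).symm
  rw [rTensor_injective_iff_lcomp_surjective, hconj, EquivLike.comp_surjective,
    EquivLike.surjective_comp]

theorem exists_dual_comp_eq_id_of_rTensor_injective {f : A →ₗ[R] B}
    (hf : Function.Injective (f.rTensor (CharacterModule A))) :
    ∃ s : CharacterModule A →ₗ[R] CharacterModule B, dual f ∘ₗ s = LinearMap.id :=
  (rTensor_injective_iff_dual_comp_surjective f _).1 hf LinearMap.id

theorem rTensor_injective_of_dual_comp_eq_id {f : A →ₗ[R] B}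
    {s : CharacterModule A →ₗ[R] CharacterModule B} (hs : dual f ∘ₗ s = LinearMap.id)
    (X : Type*) [AddCommGroup X] [Module R X] : Function.Injective (f.rTensor X) :=
  (rTensor_injective_iff_dual_comp_surjective f X).2 fun h =>
    ⟨s ∘ₗ h, show dual f ∘ₗ s ∘ₗ h = h by rw [← LinearMap.comp_assoc, hs, LinearMap.id_comp]⟩

end CharacterModule

namespace GorensteinPaper

variable (R : Type u) [CommRing R]

theorem isSES_dual {A B C : ModuleCat.{u} R} {i : A ⟶ B} {p : B ⟶ C} (h : IsSES R i p) :
    IsSES R (ModuleCat.ofHom (CharacterModule.dual p.hom))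
      (ModuleCat.ofHom (CharacterModule.dual i.hom)) :=
  ⟨CharacterModule.dual_injective_of_surjective _ h.2.1,
    CharacterModule.dual_surjective_of_injective _ h.1, CharacterModule.dual_exact h.2.2⟩

/-- a short exact sequence is pure if and only if its character sequence
(obtained by applying `Hom_ℤ(-, ℚ/ℤ)`) is a split short exact sequence. -/
theorem stmt5 {A B C : ModuleCat.{u} R} (i : A ⟶ B) (p : B ⟶ C) (h : IsSES R i p) :
    IsPureSES R i p ↔
      (IsSES R (ModuleCat.ofHom (CharacterModule.dual (p.hom : B →ₗ[R] C)))
          (ModuleCat.ofHom (CharacterModule.dual (i.hom : A →ₗ[R] B))) ∧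
        ∃ s : CharacterModule A →ₗ[R] CharacterModule B,
          (CharacterModule.dual (i.hom : A →ₗ[R] B)) ∘ₗ s = LinearMap.id) := by
  refine ⟨fun hpure => ⟨isSES_dual R h, ?_⟩, fun ⟨_, _, hs⟩ => ⟨h, fun X => ?_⟩⟩
  · exact CharacterModule.exists_dual_comp_eq_id_of_rTensor_injective
      ((LinearMap.lTensor_inj_iff_rTensor_inj _ _).1 (hpure.2 (.of R (CharacterModule A))))
  · exact (LinearMap.lTensor_inj_iff_rTensor_inj _ _).2
      (CharacterModule.rTensor_injective_of_dual_comp_eq_id hs X)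

end GorensteinPaper
end

section
/- The class of modules of flat dimension at most n is closed under pure submodules and pure quotients. -/
universe u

open CategoryTheory TensorProduct

namespace GorensteinPaper

variable (R : Type u) [CommRing R]

/-!
Induction on `n`. Pure submodules and pure quotients of flat modules are flat. For the step,
take `0 → K → F → B → 0` with `F` flat and `fd K ≤ n`, and a surjection `qA : FA → A` with `FA`
projective. The kernel of `FA × F → B`, `(a, f) ↦ i (qA a) + q f`, is isomorphic to `FA × K`
because `FA` lifts along `q`, so it has flat dimension `≤ n`; and the kernels of `qA`, of this
map and of `p ∘ q : F → C` form a pure short exact sequence. The induction hypothesis applied to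
it bounds the flat dimension of the first syzygies of `A` and `C` by `n`.
-/

open LinearMap

section PureMaps

variable {R} {M N P : Type u} [AddCommGroup M] [AddCommGroup N] [AddCommGroup P]
  [Module R M] [Module R N] [Module R P]

instance _root_.Module.Flat.prod {M N : Type*} [AddCommGroup M] [AddCommGroup N] [Module R M]
    [Module R N] [Module.Flat R M] [Module.Flat R N] : Module.Flat R (M × N) := by
  rw [Module.Flat.iff_rTensor_injectiveₛ]
  intro Q _ _ S
  have hnat : (TensorProduct.prodRight R R Q M N).toLinearMap ∘ₗ rTensor (M × N) S.subtype =
      (rTensor M S.subtype).prodMap (rTensor N S.subtype) ∘ₗ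
        (TensorProduct.prodRight R R S M N).toLinearMap := by
    ext <;> simp
  have hinj : Function.Injective ((rTensor M S.subtype).prodMap (rTensor N S.subtype)) :=
    (Module.Flat.rTensor_preserves_injective_linearMap _ S.injective_subtype).prodMap
      (Module.Flat.rTensor_preserves_injective_linearMap _ S.injective_subtype)
  refine Function.Injective.of_comp (f := TensorProduct.prodRight R R Q M N) ?_
  rw [← LinearEquiv.coe_toLinearMap, ← coe_comp, hnat, coe_comp]
  exact hinj.comp (LinearEquiv.injective _)

def _root_.LinearMap.IsPure (f : M →ₗ[R] N) : Prop :=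
  ∀ (X : Type u) [AddCommGroup X] [Module R X], Function.Injective (f.lTensor X)

theorem _root_.LinearMap.IsPure.of_comp_eq_id {f : M →ₗ[R] N} (r : N →ₗ[R] M)
    (h : r ∘ₗ f = LinearMap.id) : f.IsPure := by
  intro X _ _
  refine Function.LeftInverse.injective (g := r.lTensor X) fun x => ?_
  rw [← lTensor_comp_apply, h, lTensor_id_apply]

theorem _root_.LinearMap.lTensor_rTensor_comm {M' N' : Type u} [AddCommGroup M'] [AddCommGroup N']
    [Module R M'] [Module R N'] (f : M →ₗ[R] M') (g : N →ₗ[R] N') (x : M ⊗[R] N) :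
    g.lTensor M' (f.rTensor N x) = f.rTensor N' (g.lTensor M x) := by
  rw [← LinearMap.comp_apply, ← LinearMap.comp_apply, lTensor_comp_rTensor, rTensor_comp_lTensor]

theorem _root_.Module.Flat.of_isPure [Module.Flat R N] {f : M →ₗ[R] N} (hf : f.IsPure) :
    Module.Flat R M := by
  rw [Module.Flat.iff_rTensor_injective']
  intro I
  refine Function.Injective.of_comp (f := f.lTensor R) ?_
  rw [← coe_comp, lTensor_comp_rTensor, ← rTensor_comp_lTensor, coe_comp]
  exact (Module.Flat.rTensor_preserves_injective_linearMap _ I.injective_subtype).comp (hf I)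

theorem _root_.Module.Flat.of_isPure_of_exact [Module.Flat R N] {f : M →ₗ[R] N}
    {g : N →ₗ[R] P} (hf : f.IsPure) (hg : Function.Surjective g) (hfg : Function.Exact f g) :
    Module.Flat R P := by
  rw [Module.Flat.iff_rTensor_injective']
  intro I
  rw [injective_iff_map_eq_zero]
  intro x hx
  obtain ⟨y, rfl⟩ := lTensor_surjective I hg x
  obtain ⟨a, ha⟩ := (lTensor_exact R hfg hg (I.subtype.rTensor N y)).mp <| by
    rwa [lTensor_rTensor_comm]
  have hqa : I.mkQ.rTensor M a = 0 := hf (R ⧸ I) <| by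
    rw [map_zero, lTensor_rTensor_comm, ha, ← rTensor_comp_apply,
      (exact_subtype_mkQ I).linearMap_comp_eq_zero, rTensor_zero, LinearMap.zero_apply]
  obtain ⟨a', rfl⟩ := (rTensor_exact M (exact_subtype_mkQ I) I.mkQ_surjective a).mp hqa
  have hy : f.lTensor I a' = y :=
    Module.Flat.rTensor_preserves_injective_linearMap _ I.injective_subtype <| by
      rw [← lTensor_rTensor_comm, ha]
  rw [← hy, ← lTensor_comp_apply, hfg.linearMap_comp_eq_zero, lTensor_zero, LinearMap.zero_apply]

variable (R) in
theorem exists_projective_surjective (M : Type u) [AddCommGroup M] [Module R M] :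
    ∃ (P : Type u) (_ : AddCommGroup P) (_ : Module R P) (_ : Module.Projective R P)
      (π : P →ₗ[R] M), Function.Surjective π :=
  ⟨M →₀ R, _, _, inferInstance, _, Finsupp.linearCombination_id_surjective R M⟩

theorem _root_.LinearMap.IsPure.restrict_ker {A B FA FB : Type u} [AddCommGroup A]
    [AddCommGroup B] [AddCommGroup FA] [AddCommGroup FB] [Module R A] [Module R B] [Module R FA]
    [Module R FB] [Module.Flat R FB] {i : A →ₗ[R] B} {τ : FA →ₗ[R] FB}
    {qA : FA →ₗ[R] A} {qB : FB →ₗ[R] B} (hi : i.IsPure) (hτ : τ.IsPure)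
    (hqA : Function.Surjective qA) (hc : qB ∘ₗ τ = i ∘ₗ qA)
    (hτq : ∀ x ∈ ker qA, τ x ∈ ker qB) : (τ.restrict hτq).IsPure := by
  intro X _ _
  set σ := τ.restrict hτq
  have hσ : (ker qB).subtype ∘ₗ σ = τ ∘ₗ (ker qA).subtype := rfl
  obtain ⟨P, _, _, _, π, hπ⟩ := exists_projective_surjective R X
  have hκπ : Function.Exact (ker π).subtype π := exact_subtype_ker_map π
  let jA := (ker qA).subtype
  let jB := (ker qB).subtype
  rw [injective_iff_map_eq_zero]
  intro x hx
  have hxA : jA.lTensor X x = 0 := hτ X <| by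
    rw [map_zero, ← lTensor_comp_apply, ← hσ, lTensor_comp_apply, hx, map_zero]
  obtain ⟨u, rfl⟩ := rTensor_surjective _ hπ x
  obtain ⟨v, hv⟩ := (rTensor_exact FA hκπ hπ (jA.lTensor _ u)).mp <| by
    rwa [← lTensor_rTensor_comm]
  obtain ⟨y, hy⟩ := (rTensor_exact (ker qB) hκπ hπ (σ.lTensor _ u)).mp <| by
    rwa [← lTensor_rTensor_comm]
  have hvy : τ.lTensor _ v = jB.lTensor _ y :=
    Module.Flat.rTensor_preserves_injective_linearMap _ (ker π).injective_subtype <| by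
      rw [← lTensor_rTensor_comm, hv, ← lTensor_comp_apply, ← hσ, lTensor_comp_apply, ← hy,
        lTensor_rTensor_comm]
  -- purity of `i` is used for the syzygy `ker π` of `X`, not for `X` itself
  have hqv : qA.lTensor _ v = 0 := hi (ker π) <| by
    rw [map_zero, ← lTensor_comp_apply, ← hc, lTensor_comp_apply, hvy, ← lTensor_comp_apply,
      (exact_subtype_ker_map qB).linearMap_comp_eq_zero, lTensor_zero, LinearMap.zero_apply]
  obtain ⟨z, rfl⟩ := (lTensor_exact _ (exact_subtype_ker_map qA) hqA v).mp hqv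
  have hzu : (ker π).subtype.rTensor _ z = u :=
    Module.Flat.lTensor_preserves_injective_linearMap _ (ker qA).injective_subtype <| by
      rw [lTensor_rTensor_comm, hv]
  rw [← hzu, ← rTensor_comp_apply, hκπ.linearMap_comp_eq_zero, rTensor_zero,
    LinearMap.zero_apply]

noncomputable def kerCoprodEquivOfLift {K F Q B : Type u} [AddCommGroup K] [AddCommGroup F]
    [AddCommGroup Q] [AddCommGroup B] [Module R K] [Module R F] [Module R Q] [Module R B]
    {k : K →ₗ[R] F} {q : F →ₗ[R] B} (hk : Function.Injective k) (hkq : Function.Exact k q)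
    {g : Q →ₗ[R] B} {s : Q →ₗ[R] F} (hs : q ∘ₗ s = g) : (Q × K) ≃ₗ[R] ker (g.coprod q) :=
  have hqs (x : Q) : q (s x) = g x := congr($hs x)
  LinearEquiv.ofBijective
    (codRestrict (ker (g.coprod q)) ((fst R Q K).prod (k ∘ₗ snd R Q K - s ∘ₗ fst R Q K)) fun x => by
      simp [hqs, hkq.apply_apply_eq_zero])
    ⟨fun x y hxy => by
      obtain ⟨h1, h2⟩ : x.1 = y.1 ∧ k x.2 - s x.1 = k y.2 - s y.1 := by
        simpa [Prod.ext_iff] using congr(Subtype.val $hxy)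
      rw [h1, sub_left_inj] at h2
      exact Prod.ext h1 (hk h2),
    fun ⟨⟨x, f⟩, hxf⟩ => by
      obtain ⟨c, hc⟩ := (hkq (f + s x)).mp <| by
        rw [map_add, hqs]
        simpa [add_comm] using hxf
      exact ⟨(x, c), by ext <;> simp [hc]⟩⟩

end PureMaps

section FlatDimension

def FdLEPureClosed (n : ℕ) : Prop :=
  ∀ ⦃A B C : ModuleCat.{u} R⦄ (i : A ⟶ B) (p : B ⟶ C),
    IsPureSES R i p → FdLE R n B → FdLE R n A ∧ FdLE R n C

variable {R}

theorem FdLE.of_linearEquiv {n : ℕ} {M N : ModuleCat.{u} R} (e : M ≃ₗ[R] N)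
    (h : FdLE R n M) : FdLE R n N := by
  induction n generalizing M N with
  | zero =>
    have : Module.Flat R M := h
    exact Module.Flat.of_linearEquiv e.symm
  | succ n ih =>
    rcases h with h | ⟨K, F, k, q, ⟨hk, hq, hkq⟩, hF, hK⟩
    · exact Or.inl (ih e h)
    · refine Or.inr ⟨K, F, k, q ≫ ModuleCat.ofHom e.toLinearMap,
        ⟨hk, e.surjective.comp hq, ?_⟩, hF, hK⟩
      exact e.postcomp_exact_iff_exact.mpr hkq

theorem FdLE.prod_left {n : ℕ} (F : Type u) [AddCommGroup F] [Module R F] [Module.Flat R F]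
    {K : ModuleCat.{u} R} (h : FdLE R n K) : FdLE R n (ModuleCat.of R (F × K)) := by
  induction n generalizing K with
  | zero =>
    have : Module.Flat R K := h
    exact inferInstanceAs (Module.Flat R (F × K))
  | succ n ih =>
    rcases h with h | ⟨K', F', k, q, ⟨hk, hq, hkq⟩, hF', hK'⟩
    · exact Or.inl (ih h)
    · have : Module.Flat R F' := hF'
      refine Or.inr ⟨K', ModuleCat.of R (F × F'), ModuleCat.ofHom (inr R F F' ∘ₗ k.hom),
        ModuleCat.ofHom ((LinearMap.id : F →ₗ[R] F).prodMap q.hom),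
        ⟨(inr_injective).comp hk, Function.surjective_id.prodMap hq, ?_⟩,
        inferInstanceAs (Module.Flat R (F × F')), hK'⟩
      rintro ⟨x, y⟩
      simp [Prod.ext_iff, hkq y, eq_comm (a := x)]

theorem FdLE.succ_of_surjective {n : ℕ} {F : Type u} [AddCommGroup F] [Module R F]
    [Module.Flat R F] {M : ModuleCat.{u} R} {q : F →ₗ[R] M} (hq : Function.Surjective q)
    (h : FdLE R n (ModuleCat.of R (ker q))) : FdLE R (n + 1) M :=
  Or.inr ⟨_, ModuleCat.of R F, ModuleCat.ofHom (ker q).subtype, ModuleCat.ofHom q,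
    ⟨(ker q).injective_subtype, hq, exact_subtype_ker_map q⟩, inferInstanceAs (Module.Flat R F), h⟩

theorem IsPureSES.isPure {A B C : ModuleCat.{u} R} {i : A ⟶ B} {p : B ⟶ C}
    (h : IsPureSES R i p) : i.hom.IsPure :=
  fun X _ _ => h.2 (ModuleCat.of R X)

theorem IsPureSES.exists_ker_coprod {A B C : ModuleCat.{u} R} {i : A ⟶ B} {p : B ⟶ C}
    (h : IsPureSES R i p) {FA F : Type u} [AddCommGroup FA] [AddCommGroup F] [Module R FA]
    [Module R F] [Module.Flat R FA] [Module.Flat R F] {qA : FA →ₗ[R] A}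
    (hqA : Function.Surjective qA) (q : F →ₗ[R] B) :
    ∃ (σ : ModuleCat.of R (ker qA) ⟶ ModuleCat.of R (ker ((i.hom ∘ₗ qA).coprod q)))
      (ρ : ModuleCat.of R (ker ((i.hom ∘ₗ qA).coprod q)) ⟶ ModuleCat.of R (ker (p.hom ∘ₗ q))),
      IsPureSES R σ ρ := by
  have hpure := h.isPure
  obtain ⟨⟨hi, -, hip⟩, -⟩ := h
  have hσ : ∀ x ∈ ker qA, inl R FA F x ∈ ker ((i.hom ∘ₗ qA).coprod q) := fun x hx => by
    simp [mem_ker.mp hx]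
  have hρ : ∀ y ∈ ker ((i.hom ∘ₗ qA).coprod q), snd R FA F y ∈ ker (p.hom ∘ₗ q) := by
    intro y hy
    simpa [hip.apply_apply_eq_zero] using congr(p.hom $(mem_ker.mp hy))
  refine ⟨ModuleCat.ofHom ((inl R FA F).restrict hσ), ModuleCat.ofHom ((snd R FA F).restrict hρ),
    ⟨⟨?_, ?_, ?_⟩, fun X => ?_⟩⟩
  · intro x y hxy
    exact Subtype.ext congr((Subtype.val $hxy).1)
  · rintro ⟨f, hf⟩
    obtain ⟨a, ha⟩ := (hip (q f)).mp hf
    obtain ⟨x, rfl⟩ := hqA a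
    exact ⟨⟨(-x, f), by simp [ha]⟩, rfl⟩
  · rintro ⟨⟨x, f⟩, hxf⟩
    constructor
    · intro hf
      obtain rfl : f = 0 := congr(Subtype.val $hf)
      have hx : qA x = 0 := hi (by simpa using hxf)
      exact ⟨⟨x, hx⟩, rfl⟩
    · rintro ⟨a, ha⟩
      rw [← ha]
      rfl
  · exact hpure.restrict_ker
      (.of_comp_eq_id (fst R FA F) (fst_comp_inl R FA F)) hqA (coprod_inl _ _) hσ X

theorem fdLEPureClosed_zero : FdLEPureClosed R 0 := by
  intro A B C i p h hB
  have : Module.Flat R B := hB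
  exact ⟨Module.Flat.of_isPure h.isPure, Module.Flat.of_isPure_of_exact h.isPure h.1.2.1 h.1.2.2⟩

theorem FdLEPureClosed.succ {n : ℕ} (ih : FdLEPureClosed R n) : FdLEPureClosed R (n + 1) := by
  intro A B C i p h hB
  rcases hB with hB | ⟨K, F, k, q, ⟨hk, hq, hkq⟩, hF, hK⟩
  · exact (ih i p h hB).imp Or.inl Or.inl
  have : Module.Flat R F := hF
  obtain ⟨FA, _, _, _, qA, hqA⟩ := exists_projective_surjective R A
  obtain ⟨s, hs⟩ := Module.projective_lifting_property q.hom (i.hom ∘ₗ qA) hq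
  obtain ⟨σ, ρ, hσρ⟩ := h.exists_ker_coprod hqA q.hom
  have hΩB : FdLE R n (ModuleCat.of R (ker ((i.hom ∘ₗ qA).coprod q.hom))) :=
    (FdLE.prod_left FA hK).of_linearEquiv (kerCoprodEquivOfLift hk hkq hs)
  obtain ⟨hΩA, hΩC⟩ := ih σ ρ hσρ hΩB
  exact ⟨.succ_of_surjective hqA hΩA,
    .succ_of_surjective (q := p.hom ∘ₗ q.hom) (h.1.2.1.comp hq) hΩC⟩

theorem fdLEPureClosed : ∀ n, FdLEPureClosed R n
  | 0 => fdLEPureClosed_zero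
  | n + 1 => (fdLEPureClosed n).succ

end FlatDimension

/-- the class of modules of flat dimension at most `n` is closed under
pure submodules and pure quotients. -/
theorem stmt6 (n : ℕ) {A B C : ModuleCat.{u} R} (i : A ⟶ B) (p : B ⟶ C)
    (h : IsPureSES R i p) (hB : FdLE R n B) :
    FdLE R n A ∧ FdLE R n C :=
  fdLEPureClosed n i p h hB

end GorensteinPaper
end

section
/- If every injective left R-module has projective dimension at most n and every injective right R-module has flat dimension at most n, then every left R-module has PGF dimension at most n. -/
universe u

open CategoryTheory TensorProduct

namespace GorensteinPaper

variable (R : Type u) [CommRing R]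

/-!
Let `K` be an `n`-th syzygy of `M`; it suffices to show that `K` is PGF. Kernels of projective
presentations of `n`-th syzygies are again `n`-th syzygies. Dually, embedding `M` into an
injective module `E`, which has projective dimension at most `n`, a mapping cone argument
embeds `K` into a projective module with cokernel an `n`-th syzygy of `E ⧸ M`. Splicing these
short exact sequences in both directions yields an exact complex of projective modules with
`K` as a syzygy. It stays exact under `E ⊗ -` for injective `E` because `E` has flat dimension
at most `n`, so by dimension shifting `Tor₁(E, -)` vanishes on `n`-th syzygies.
-/

variable {R}

section LinearAlgebra

variable {M N P Q X : Type*} [AddCommGroup M] [AddCommGroup N] [AddCommGroup P] [AddCommGroup Q]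
  [AddCommGroup X] [Module R M] [Module R N] [Module R P] [Module R Q] [Module R X]

lemma exact_comp_of_surjective_of_injective {f : N →ₗ[R] P} {g : P →ₗ[R] Q}
    (hfg : Function.Exact f g) {f' : M →ₗ[R] N} (hf' : Function.Surjective f')
    {g' : Q →ₗ[R] X} (hg' : Function.Injective g') : Function.Exact (f ∘ₗ f') (g' ∘ₗ g) :=
  hf'.comp_exact_iff_exact.mpr (hg'.comp_exact_iff_exact.mpr hfg)

variable (R X) in
def alternatingEnd (i : ℤ) : X →ₗ[R] X := if Even i then LinearMap.id else 0

lemma exact_alternatingEnd (i : ℤ) :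
    Function.Exact (alternatingEnd R X (i + 1)) (alternatingEnd R X i) := by
  unfold alternatingEnd
  by_cases hi : Even i
  · rw [if_neg (Int.not_even_iff_odd.mpr hi.add_one), if_pos hi]
    exact (LinearMap.exact_zero_iff_injective _ _).mpr Function.injective_id
  · rw [if_pos (Int.not_even_iff_odd.mp hi).add_one, if_neg hi]
    exact (LinearMap.exact_zero_iff_surjective _ _).mpr Function.surjective_id

lemma lTensor_alternatingEnd (i : ℤ) :
    (alternatingEnd R X i).lTensor M = alternatingEnd R (M ⊗[R] X) i := by
  unfold alternatingEnd
  split_ifs <;> simp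

end LinearAlgebra

section Tensor

variable {A F B C G E : Type*} [AddCommGroup A] [AddCommGroup F] [AddCommGroup B]
  [AddCommGroup C] [AddCommGroup G] [AddCommGroup E] [Module R A] [Module R F] [Module R B]
  [Module R C] [Module R G] [Module R E]

/-- Balance of `Tor₁`: if `Tor₁(E, B)` computed from the flat presentation `C → G ↠ E` vanishes,
then so does `Tor₁(E, B)` computed from `A ↪ F ↠ B`. -/
lemma lTensor_injective_of_rTensor_injective [Module.Flat R G]
    {i : A →ₗ[R] F} {p : F →ₗ[R] B} (hi : Function.Injective i) (hp : Function.Surjective p)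
    (hip : Function.Exact i p) {j : C →ₗ[R] G} {q : G →ₗ[R] E} (hq : Function.Surjective q)
    (hjq : Function.Exact j q) (h : Function.Injective (j.rTensor B)) :
    Function.Injective (i.lTensor E) := by
  rw [injective_iff_map_eq_zero]
  intro x hx
  obtain ⟨y, rfl⟩ := LinearMap.rTensor_surjective A hq x
  have hy : q.rTensor F (i.lTensor G y) = 0 := by
    rwa [← LinearMap.comp_apply, LinearMap.rTensor_comp_lTensor, ← LinearMap.lTensor_comp_rTensor]
  obtain ⟨c, hc⟩ := (rTensor_exact F hjq hq (i.lTensor G y)).mp hy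
  have hcB : p.lTensor C c = 0 := by
    apply h
    rw [map_zero, ← LinearMap.comp_apply, LinearMap.rTensor_comp_lTensor,
      ← LinearMap.lTensor_comp_rTensor, LinearMap.comp_apply, hc, ← LinearMap.comp_apply,
      ← LinearMap.lTensor_comp, hip.linearMap_comp_eq_zero, LinearMap.lTensor_zero,
      LinearMap.zero_apply]
  obtain ⟨a, rfl⟩ := (lTensor_exact C hip hp c).mp hcB
  have ha : j.rTensor A a = y := by
    apply Module.Flat.lTensor_preserves_injective_linearMap i hi
    rw [← hc, ← LinearMap.comp_apply, LinearMap.lTensor_comp_rTensor,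
      ← LinearMap.rTensor_comp_lTensor, LinearMap.comp_apply]
  rw [← ha, ← LinearMap.comp_apply, ← LinearMap.rTensor_comp, hjq.linearMap_comp_eq_zero,
    LinearMap.rTensor_zero, LinearMap.zero_apply]

end Tensor

section Cone

variable {M E M₁ F E₁ Q : Type*} [AddCommGroup M] [AddCommGroup E] [AddCommGroup M₁]
  [AddCommGroup F] [AddCommGroup E₁] [AddCommGroup Q] [Module R M] [Module R E] [Module R M₁]
  [Module R F] [Module R E₁] [Module R Q]

/-- The sequence `M₁ ↪ E₁ × F → Q ↠ E ⧸ M` is the mapping cone of a lift `F → Q` of `u`. -/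
lemma exists_exact_prod_of_injective [Module.Projective R F] {u : M →ₗ[R] E}
    (hu : Function.Injective u) {i : M₁ →ₗ[R] F} {p : F →ₗ[R] M} (hi : Function.Injective i)
    (hp : Function.Surjective p) (hip : Function.Exact i p) {j : E₁ →ₗ[R] Q} {q : Q →ₗ[R] E}
    (hj : Function.Injective j) (hq : Function.Surjective q) (hjq : Function.Exact j q) :
    ∃ (v : M₁ →ₗ[R] E₁ × F) (φ : E₁ × F →ₗ[R] Q), Function.Injective v ∧
      Function.Exact v φ ∧ Function.Exact φ ((LinearMap.range u).mkQ ∘ₗ q) := by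
  obtain ⟨ℓ, hℓ⟩ := Module.projective_lifting_property q (u ∘ₗ p) hq
  have hℓ' (x : F) : q (ℓ x) = u (p x) := LinearMap.congr_fun hℓ x
  have hℓi (m : M₁) : ℓ (i m) ∈ LinearMap.range j := by
    rw [← hjq.linearMap_ker_eq, LinearMap.mem_ker, hℓ', hip.apply_apply_eq_zero, map_zero]
  let w := LinearMap.codRestrictOfInjective (ℓ ∘ₗ i) j hj hℓi
  have hw (m : M₁) : j (w m) = ℓ (i m) := LinearMap.codRestrictOfInjective_comp_apply _ _ _ _ m
  refine ⟨w.prod i, j.coprod (-ℓ), fun m m' h ↦ hi (congrArg Prod.snd h), ?_, ?_⟩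
  · rintro ⟨e, x⟩
    have hφ : j.coprod (-ℓ) (e, x) = j e - ℓ x := by simp [sub_eq_add_neg]
    rw [hφ, sub_eq_zero]
    constructor
    · intro h
      have hx : p x = 0 := hu (by rw [← hℓ', ← h, hjq.apply_apply_eq_zero, map_zero])
      obtain ⟨m, rfl⟩ := (hip x).mp hx
      exact ⟨m, Prod.ext (hj ((hw m).trans h.symm)) rfl⟩
    · rintro ⟨m, hm⟩
      obtain ⟨rfl, rfl⟩ := Prod.ext_iff.mp hm
      exact hw m
  · intro y
    rw [LinearMap.comp_apply, Submodule.mkQ_apply, Submodule.Quotient.mk_eq_zero]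
    constructor
    · rintro ⟨m, hm⟩
      obtain ⟨x, rfl⟩ := hp m
      obtain ⟨e, he⟩ := (hjq (y - ℓ x)).mp (by rw [map_sub, hℓ', hm, sub_self])
      exact ⟨(e, -x), by simp [he]⟩
    · rintro ⟨⟨e, x⟩, rfl⟩
      exact ⟨-p x, by simp [hjq.apply_apply_eq_zero, hℓ']⟩

end Cone

section Presentations

structure ProjectiveSES (A B : ModuleCat.{u} R) where
  P : ModuleCat.{u} R
  f : A ⟶ P
  g : P ⟶ B
  projective : Module.Projective R P
  isSES : IsSES R f g

lemma exists_projectiveSES (M : ModuleCat.{u} R) : ∃ K, Nonempty (ProjectiveSES K M) :=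
  let π := Finsupp.linearCombination R (id : M → M)
  ⟨.of R (LinearMap.ker π), ⟨{
    P := .of R (M →₀ R)
    f := ModuleCat.ofHom (LinearMap.ker π).subtype
    g := ModuleCat.ofHom π
    projective := inferInstanceAs (Module.Projective R (M →₀ R))
    isSES := ⟨Subtype.coe_injective, Finsupp.linearCombination_id_surjective R M,
      LinearMap.exact_subtype_ker_map π⟩ }⟩⟩

lemma exists_injective_into_injective (M : ModuleCat.{u} R) :
    ∃ (E : ModuleCat.{u} R) (u : M ⟶ E), Module.Injective R E ∧ Function.Injective u :=
  ⟨Injective.under M, Injective.ι M,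
    (Module.injective_iff_injective_object R _).mpr (Injective.injective_under M),
    (ModuleCat.mono_iff_injective _).mp inferInstance⟩

lemma isSES_liftQ {M N Q E : Type u} [AddCommGroup M] [AddCommGroup N] [AddCommGroup Q]
    [AddCommGroup E] [Module R M] [Module R N] [Module R Q] [Module R E]
    {v : M →ₗ[R] N} {φ : N →ₗ[R] Q} {π : Q →ₗ[R] E} (hvφ : Function.Exact v φ)
    (hφπ : Function.Exact φ π) (hπ : Function.Surjective π) :
    IsSES R (ModuleCat.ofHom (X := ModuleCat.of R (N ⧸ LinearMap.range v))
      (Y := ModuleCat.of R Q) ((LinearMap.range v).liftQ φ (hvφ · |>.mpr)))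
      (ModuleCat.ofHom (Y := ModuleCat.of R E) π) :=
  ⟨LinearMap.injective_range_liftQ_of_exact hvφ, hπ,
    (Submodule.mkQ_surjective _).comp_exact_iff_exact.mp hφπ⟩

end Presentations

section ResolutionDimension

variable {C : ModuleCat.{u} R → Prop}

lemma ResDimLE.exists_isSES (hC : C (.of R PUnit)) {n : ℕ} {X : ModuleCat.{u} R}
    (hX : ResDimLE R C (n + 1) X) :
    ∃ (K F : ModuleCat.{u} R) (i : K ⟶ F) (p : F ⟶ X), IsSES R i p ∧ C F ∧ ResDimLE R C n K := by
  induction n generalizing X with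
  | zero =>
    rcases hX with hX | hX
    · refine ⟨.of R PUnit, X, ModuleCat.ofHom 0, ModuleCat.ofHom LinearMap.id,
        ⟨fun _ _ _ ↦ Subsingleton.elim _ _, Function.surjective_id, ?_⟩, hX, hC⟩
      exact (LinearMap.exact_zero_iff_injective _ _).mpr Function.injective_id
    · exact hX
  | succ n ih =>
    rcases hX with hX | hX
    · obtain ⟨K, F, i, p, hip, hF, hK⟩ := ih hX
      exact ⟨K, F, i, p, hip, hF, Or.inl hK⟩
    · exact hX

lemma ResDimLE.prod {B : ModuleCat.{u} R} (hC : ∀ X : ModuleCat.{u} R, C X → C (.of R (X × B)))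
    {n : ℕ} {A : ModuleCat.{u} R} (hA : ResDimLE R C n A) : ResDimLE R C n (.of R (A × B)) := by
  induction n generalizing A with
  | zero => exact hC A hA
  | succ n ih =>
    rcases hA with hA | ⟨K, F, i, p, ⟨hi, hp, hip⟩, hF, hK⟩
    · exact Or.inl (ih hA)
    · refine Or.inr ⟨K, .of R (F × B), ModuleCat.ofHom (i.hom.prod 0),
        ModuleCat.ofHom (p.hom.prodMap LinearMap.id), ⟨?_, ?_, ?_⟩, hC F hF, hK⟩
      · exact fun k k' h ↦ hi (congrArg Prod.fst h)
      · exact Prod.map_surjective.mpr ⟨hp, Function.surjective_id⟩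
      · rintro ⟨x, b⟩
        have hx : p.hom x = 0 ↔ ∃ k, i.hom k = x := hip x
        simp [Prod.ext_iff, hx, eq_comm (a := (0 : B))]

end ResolutionDimension

section Syzygies

/-- `IsSyzygyOf n K M`: there is an exact sequence `0 → K → Pₙ₋₁ → ⋯ → P₀ → M → 0` with
projective `Pᵢ`. -/
def IsSyzygyOf : ℕ → ModuleCat.{u} R → ModuleCat.{u} R → Prop
  | 0, K, M => K = M
  | n + 1, K, M => ∃ M₁, IsSyzygyOf n K M₁ ∧ Nonempty (ProjectiveSES M₁ M)

def IsSyzygy (n : ℕ) (K : ModuleCat.{u} R) : Prop := ∃ M, IsSyzygyOf n K M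

lemma exists_isSyzygyOf (n : ℕ) (M : ModuleCat.{u} R) : ∃ K, IsSyzygyOf n K M := by
  induction n generalizing M with
  | zero => exact ⟨M, rfl⟩
  | succ n ih =>
    obtain ⟨M₁, hM₁⟩ := exists_projectiveSES M
    obtain ⟨K, hK⟩ := ih M₁
    exact ⟨K, M₁, hK, hM₁⟩

lemma IsSyzygyOf.succ {n : ℕ} {K K' M : ModuleCat.{u} R} (hK : IsSyzygyOf n K M)
    (e : ProjectiveSES K' K) : IsSyzygyOf (n + 1) K' M := by
  induction n generalizing M with
  | zero =>
    subst hK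
    exact ⟨K', rfl, ⟨e⟩⟩
  | succ n ih =>
    obtain ⟨M₁, hK₁, hM₁⟩ := hK
    exact ⟨M₁, ih hK₁, hM₁⟩

lemma IsSyzygyOf.exists_projectiveSES {n : ℕ} {K M : ModuleCat.{u} R}
    (hK : IsSyzygyOf (n + 1) K M) : ∃ J, IsSyzygyOf n J M ∧ Nonempty (ProjectiveSES K J) := by
  induction n generalizing M with
  | zero =>
    obtain ⟨_, rfl, hK⟩ := hK
    exact ⟨M, rfl, hK⟩
  | succ n ih =>
    obtain ⟨M₁, hK₁, hM₁⟩ := hK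
    obtain ⟨J, hJ, hKJ⟩ := ih hK₁
    exact ⟨J, ⟨M₁, hJ, hM₁⟩, hKJ⟩

lemma IsSyzygyOf.lTensor_injective {n : ℕ} {E B M : ModuleCat.{u} R} (hE : FdLE R n E)
    (hB : IsSyzygyOf n B M) {A F : ModuleCat.{u} R} {i : A ⟶ F} {p : F ⟶ B}
    (hip : IsSES R i p) : Function.Injective (i.hom.lTensor E) := by
  induction n generalizing E B M A F with
  | zero =>
    have : Module.Flat R E := hE
    exact Module.Flat.lTensor_preserves_injective_linearMap i.hom hip.1
  | succ n ih =>
    rcases hE with hE | ⟨E', G, j, q, ⟨hj, hq, hjq⟩, hG, hE'⟩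
    · obtain ⟨M₁, hB₁, -⟩ := hB
      exact ih hE hB₁ hip
    · have : Module.Flat R G := hG
      refine lTensor_injective_of_rTensor_injective hip.1 hip.2.1 hip.2.2 hq hjq ?_
      obtain ⟨J, hJ, ⟨e⟩⟩ := hB.exists_projectiveSES
      have : Module.Projective R e.P := e.projective
      have hcomm : e.f.hom.lTensor G ∘ₗ j.hom.rTensor B =
          j.hom.rTensor e.P ∘ₗ e.f.hom.lTensor E' := by
        rw [LinearMap.lTensor_comp_rTensor, LinearMap.rTensor_comp_lTensor]
      refine Function.Injective.of_comp (f := e.f.hom.lTensor G) ?_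
      rw [← LinearMap.coe_comp, hcomm, LinearMap.coe_comp]
      exact (Module.Flat.rTensor_preserves_injective_linearMap j.hom hj).comp (ih hE' hJ e.isSES)

lemma IsSyzygyOf.exists_projectiveSES_quotient {n : ℕ} {K M E : ModuleCat.{u} R}
    (hK : IsSyzygyOf n K M) {u : M ⟶ E} (hu : Function.Injective u) (hE : PdLE R n E) :
    ∃ K', IsSyzygyOf n K' (.of R (E ⧸ LinearMap.range u.hom)) ∧
      Nonempty (ProjectiveSES K K') := by
  induction n generalizing M E with
  | zero =>
    subst hK
    exact ⟨_, rfl, ⟨⟨E, u, ModuleCat.ofHom (LinearMap.range u.hom).mkQ, hE,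
      hu, Submodule.mkQ_surjective _, LinearMap.exact_map_mkQ_range u.hom⟩⟩⟩
  | succ n ih =>
    obtain ⟨M₁, hK₁, ⟨e⟩⟩ := hK
    obtain ⟨E₁, Q, j, q, ⟨hj, hq, hjq⟩, hQ, hE₁⟩ :=
      hE.exists_isSES (inferInstanceAs (Module.Projective R PUnit.{u + 1}))
    have : Module.Projective R e.P := e.projective
    obtain ⟨v, φ, hv, hvφ, hφπ⟩ :=
      exists_exact_prod_of_injective hu e.isSES.1 e.isSES.2.1 e.isSES.2.2 hj hq hjq
    have hpd : PdLE R n (.of R (E₁ × e.P)) :=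
      hE₁.prod fun X (hX : Module.Projective R X) ↦ inferInstanceAs (Module.Projective R (X × e.P))
    obtain ⟨K', hK', hKK'⟩ := ih hK₁ (u := ModuleCat.ofHom v) hv hpd
    exact ⟨K', ⟨_, hK', ⟨⟨Q, _, _, hQ,
      isSES_liftQ hvφ hφπ ((Submodule.mkQ_surjective _).comp hq)⟩⟩⟩, hKK'⟩

lemma IsSyzygy.exists_projectiveSES_left {n : ℕ} {Z : ModuleCat.{u} R} (hZ : IsSyzygy n Z) :
    ∃ Z', IsSyzygy n Z' ∧ Nonempty (ProjectiveSES Z' Z) := by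
  obtain ⟨M, hZM⟩ := hZ
  obtain ⟨Z', ⟨e⟩⟩ := exists_projectiveSES Z
  obtain ⟨M₁, hZ'M₁, -⟩ := hZM.succ e
  exact ⟨Z', ⟨M₁, hZ'M₁⟩, ⟨e⟩⟩

lemma IsSyzygy.exists_projectiveSES_right {n : ℕ}
    (h : ∀ E : ModuleCat.{u} R, Module.Injective R E → PdLE R n E) {Z : ModuleCat.{u} R}
    (hZ : IsSyzygy n Z) : ∃ Z', IsSyzygy n Z' ∧ Nonempty (ProjectiveSES Z Z') := by
  obtain ⟨M, hZM⟩ := hZ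
  obtain ⟨E, u, hE, hu⟩ := exists_injective_into_injective M
  obtain ⟨Z', hZ', he⟩ := hZM.exists_projectiveSES_quotient hu (h E hE)
  exact ⟨Z', ⟨_, hZ'⟩, he⟩

end Syzygies

section PGF

lemma isPGF_of_projective (P : ModuleCat.{u} R) [Module.Projective R P] : IsPGF R P :=
  ⟨fun _ ↦ P, fun i ↦ ModuleCat.ofHom (alternatingEnd R P i), fun _ ↦ inferInstance,
    exact_alternatingEnd, fun E _ i ↦ by
      simpa only [ModuleCat.hom_ofHom, lTensor_alternatingEnd] using exact_alternatingEnd i,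
    ⟨(LinearEquiv.ofTop _ (by simp [alternatingEnd])).symm⟩⟩

lemma IsSyzygyOf.pgfdLE {n : ℕ} {K M : ModuleCat.{u} R} (hK : IsSyzygyOf n K M)
    (hKP : IsPGF R K) : PGFdLE R n M := by
  induction n generalizing M with
  | zero =>
    subst hK
    exact hKP
  | succ n ih =>
    obtain ⟨M₁, hK₁, ⟨e⟩⟩ := hK
    have : Module.Projective R e.P := e.projective
    exact Or.inr ⟨M₁, e.P, e.f, e.g, e.isSES, isPGF_of_projective e.P, ih hK₁⟩

lemma isPGF_of_projectiveSES_chain (Z : ℤ → ModuleCat.{u} R)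
    (e : ∀ k, ProjectiveSES (Z (k + 1)) (Z k))
    (he : ∀ k (E : ModuleCat.{u} R), Module.Injective R E →
      Function.Injective ((e k).f.hom.lTensor E)) :
    IsPGF R (Z 1) := by
  refine ⟨fun k ↦ (e k).P, fun k ↦ (e (k + 1)).g ≫ (e k).f, fun k ↦ (e k).projective,
    fun k ↦ ?_, fun E hE k ↦ ?_, ?_⟩
  · exact exact_comp_of_surjective_of_injective (e (k + 1)).isSES.2.2 (e (k + 1 + 1)).isSES.2.1
      (e k).isSES.1
  · rw [ModuleCat.hom_comp, ModuleCat.hom_comp, LinearMap.lTensor_comp, LinearMap.lTensor_comp]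
    exact exact_comp_of_surjective_of_injective
      (lTensor_exact _ (e (k + 1)).isSES.2.2 (e (k + 1)).isSES.2.1)
      (LinearMap.lTensor_surjective _ (e (k + 1 + 1)).isSES.2.1) (he k E hE)
  · have hrange : LinearMap.range ((e 1).g ≫ (e 0).f).hom = LinearMap.range (e 0).f.hom :=
      LinearMap.range_comp_of_range_eq_top _ (LinearMap.range_eq_top.mpr (e 1).isSES.2.1)
    exact ⟨(LinearEquiv.ofInjective _ (e 0).isSES.1).trans (LinearEquiv.ofEq _ _ hrange.symm)⟩

lemma isPGF_of_forall_projectiveSES (C : ModuleCat.{u} R → Prop)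
    (left : ∀ Z, C Z → ∃ Z', C Z' ∧ Nonempty (ProjectiveSES Z' Z))
    (right : ∀ Z, C Z → ∃ Z', C Z' ∧ Nonempty (ProjectiveSES Z Z'))
    (tor : ∀ A Z, C Z → ∀ e : ProjectiveSES A Z, ∀ E : ModuleCat.{u} R, Module.Injective R E →
      Function.Injective (e.f.hom.lTensor E))
    {K : ModuleCat.{u} R} (hK : C K) : IsPGF R K := by
  choose syz hsyz esyz using fun Z : {Z // C Z} ↦ left Z.1 Z.2
  choose cosyz hcosyz ecosyz using fun Z : {Z // C Z} ↦ right Z.1 Z.2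
  let syzSeq (j : ℕ) : {Z // C Z} := Nat.rec ⟨K, hK⟩ (fun _ Z ↦ ⟨syz Z, hsyz Z⟩) j
  let cosyzSeq (j : ℕ) : {Z // C Z} := Nat.rec ⟨K, hK⟩ (fun _ Z ↦ ⟨cosyz Z, hcosyz Z⟩) j
  -- `K` sits at index `1`, its iterated kernels above it and its iterated cokernels below it.
  let Z : ℤ → {Z // C Z}
    | .ofNat (j + 1) => syzSeq j
    | .ofNat 0 => cosyzSeq 1
    | .negSucc j => cosyzSeq (j + 2)
  let e : ∀ k, ProjectiveSES (Z (k + 1)).1 (Z k).1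
    | .ofNat (j + 1) => (esyz (syzSeq j)).some
    | .ofNat 0 => (ecosyz (cosyzSeq 0)).some
    | .negSucc 0 => (ecosyz (cosyzSeq 1)).some
    | .negSucc (j + 1) => (ecosyz (cosyzSeq (j + 2))).some
  exact isPGF_of_projectiveSES_chain (fun k ↦ (Z k).1) e fun k ↦ tor _ _ (Z k).2 (e k)

end PGF

variable (R)

/-- if every injective module has projective dimension at most `n` and
every injective module has flat dimension at most `n`, then every module has
PGF dimension at most `n`. -/
theorem stmt7 (n : ℕ)
    (h1 : ∀ E : ModuleCat.{u} R, Module.Injective R E → PdLE R n E)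
    (h2 : ∀ E : ModuleCat.{u} R, Module.Injective R E → FdLE R n E) :
    ∀ M : ModuleCat.{u} R, PGFdLE R n M := by
  intro M
  obtain ⟨K, hK⟩ := exists_isSyzygyOf n M
  refine hK.pgfdLE (isPGF_of_forall_projectiveSES (IsSyzygy n)
    (fun _ ↦ IsSyzygy.exists_projectiveSES_left) (fun _ ↦ IsSyzygy.exists_projectiveSES_right h1)
    ?_ ⟨M, hK⟩)
  rintro A Z ⟨N, hZ⟩ e E hE
  exact hZ.lTensor_injective (h2 E hE) e.isSES

end GorensteinPaper
end

section
/- The global PGF dimension of R is zero if and only if R is quasi-Frobenius, i.e., every injective left R-module is projective and every injective right R-module is projective. -/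
universe u

open CategoryTheory TensorProduct

namespace GorensteinPaper

variable (R : Type u) [CommRing R]

/-! An injective PGF module embeds, as the image of a differential, in a projective module; the
embedding splits, so the module is projective. Conversely, if injectives are projective, splicing
a projective resolution of `M` with an injective coresolution of `M` gives an exact complex of
projectives with `M` as a syzygy, and it stays exact under `E ⊗ -` because every injective `E`
is flat. -/

section Projectivity

universe v

lemma projective_of_injective_of_embeds_in_projective {S : Type*} {E P : Type v} [Ring S]
    [AddCommGroup E] [Module S E] [AddCommGroup P] [Module S P]
    [Module.Injective S E] [Module.Projective S P] (f : E →ₗ[S] P) (hf : Function.Injective f) :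
    Module.Projective S E := by
  obtain ⟨r, hr⟩ := Module.Injective.out f hf (LinearMap.id : E →ₗ[S] E)
  exact Module.Projective.of_split f r (LinearMap.ext hr)

variable {R}

lemma projective_of_injective_of_isPGF {E : ModuleCat.{u} R} [Module.Injective R E]
    (hE : IsPGF R E) : Module.Projective R E := by
  obtain ⟨P, d, hP, -, -, ⟨e⟩⟩ := hE
  have := hP 0
  exact projective_of_injective_of_embeds_in_projective (Submodule.subtype _ ∘ₗ e.toLinearMap)
    ((Submodule.injective_subtype _).comp e.injective)

end Projectivity

section Splice

variable {R}

lemma isPGF_of_splice (hflat : ∀ E : ModuleCat.{u} R, Module.Injective R E → Module.Flat R E)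
    (Z P : ℤ → ModuleCat.{u} R) (ι : ∀ i, Z i ⟶ P i) (π : ∀ i, P (i + 1) ⟶ Z i)
    (hP : ∀ i, Module.Projective R (P i)) (hι : ∀ i, Function.Injective (ι i))
    (hπ : ∀ i, Function.Surjective (π i)) (hexact : ∀ i, Function.Exact (ι (i + 1)) (π i)) :
    IsPGF R (Z 0) := by
  have hd (i : ℤ) :
      Function.Exact ((ι (i + 1)).hom ∘ₗ (π (i + 1)).hom) ((ι i).hom ∘ₗ (π i).hom) :=
    ((hι i).comp_exact_iff_exact).mpr ((hπ (i + 1)).comp_exact_iff_exact.mpr (hexact i))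
  have hrange : LinearMap.range ((ι 0).hom ∘ₗ (π 0).hom) = LinearMap.range (ι 0).hom :=
    LinearMap.range_comp_of_range_eq_top _ (LinearMap.range_eq_top.mpr (hπ 0))
  refine ⟨P, fun i ↦ π i ≫ ι i, hP, hd, fun E hE i ↦ ?_, ?_⟩
  · have := hflat E hE
    exact Module.Flat.lTensor_exact E (hd i)
  · exact ⟨(LinearEquiv.ofInjective _ (hι 0)).trans (LinearEquiv.ofEq _ _ hrange.symm)⟩

end Splice

section Resolution

variable {R} (M : ModuleCat.{u} R)

noncomputable def syzygy : ℕ → ModuleCat.{u} R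
  | 0 => M
  | n + 1 => ModuleCat.of R (LinearMap.ker (Projective.π (syzygy n)).hom)

noncomputable def cosyzygy : ℕ → ModuleCat.{u} R
  | 0 => M
  | n + 1 => ModuleCat.of R
      (↥(Injective.under (cosyzygy n)) ⧸ LinearMap.range (Injective.ι (cosyzygy n)).hom)

-- `spliceCycles M i` is the image of the differential `spliceTerm M (i + 1) ⟶ spliceTerm M i`.
noncomputable def spliceCycles : ℤ → ModuleCat.{u} R
  | .ofNat n => syzygy M n
  | .negSucc n => cosyzygy M (n + 1)

noncomputable def spliceTerm : ℤ → ModuleCat.{u} R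
  | .ofNat 0 => Injective.under M
  | .ofNat (n + 1) => Projective.over (syzygy M n)
  | .negSucc n => Injective.under (cosyzygy M (n + 1))

noncomputable def spliceCyclesι : ∀ i, spliceCycles M i ⟶ spliceTerm M i
  | .ofNat 0 => Injective.ι M
  | .ofNat (n + 1) => ModuleCat.ofHom (LinearMap.ker (Projective.π (syzygy M n)).hom).subtype
  | .negSucc n => Injective.ι (cosyzygy M (n + 1))

-- `Int.negSucc n + 1` only reduces once `n` is split into `0` and a successor.
noncomputable def spliceToCycles : ∀ i, spliceTerm M (i + 1) ⟶ spliceCycles M i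
  | .ofNat n => Projective.π (syzygy M n)
  | .negSucc 0 => ModuleCat.ofHom (LinearMap.range (Injective.ι (cosyzygy M 0)).hom).mkQ
  | .negSucc (n + 1) =>
    ModuleCat.ofHom (LinearMap.range (Injective.ι (cosyzygy M (n + 1))).hom).mkQ

lemma spliceCyclesι_injective : ∀ i, Function.Injective (spliceCyclesι M i)
  | .ofNat 0 => (ModuleCat.mono_iff_injective (Injective.ι M)).mp inferInstance
  | .ofNat (_ + 1) => Submodule.injective_subtype _
  | .negSucc _ => (ModuleCat.mono_iff_injective (Injective.ι _)).mp inferInstance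

lemma spliceToCycles_surjective : ∀ i, Function.Surjective (spliceToCycles M i)
  | .ofNat _ => (ModuleCat.epi_iff_surjective (Projective.π _)).mp inferInstance
  | .negSucc 0 => Submodule.mkQ_surjective _
  | .negSucc (_ + 1) => Submodule.mkQ_surjective _

lemma exact_spliceCyclesι_spliceToCycles :
    ∀ i, Function.Exact (spliceCyclesι M (i + 1)) (spliceToCycles M i)
  | .ofNat _ => LinearMap.exact_subtype_ker_map _
  | .negSucc 0 => LinearMap.exact_map_mkQ_range _
  | .negSucc (_ + 1) => LinearMap.exact_map_mkQ_range _

lemma module_injective_under (N : ModuleCat.{u} R) :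
    Module.Injective R ↥(Injective.under N : ModuleCat.{u} R) :=
  Module.injective_module_of_injective_object R _ (inj := Injective.injective_under N)

lemma spliceTerm_projective
    (h : ∀ E : ModuleCat.{u} R, Module.Injective R E → Module.Projective R E) :
    ∀ i, Module.Projective R (spliceTerm M i)
  | .ofNat 0 => h _ (module_injective_under M)
  | .ofNat (_ + 1) => ModuleCat.projective_of_module_projective (Projective.over _)
  | .negSucc _ => h _ (module_injective_under _)

lemma isPGF_of_forall_injective_projective
    (h : ∀ E : ModuleCat.{u} R, Module.Injective R E → Module.Projective R E) :
    IsPGF R M :=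
  isPGF_of_splice (fun E hE ↦ have := h E hE; inferInstance) (spliceCycles M) (spliceTerm M)
    (spliceCyclesι M) (spliceToCycles M) (spliceTerm_projective M h)
    (spliceCyclesι_injective M) (spliceToCycles_surjective M)
    (exact_spliceCyclesι_spliceToCycles M)

end Resolution

/-- the global PGF dimension of `R` is zero iff `R` is quasi-Frobenius,
i.e. every injective module is projective. -/
theorem stmt19 :
    (∀ M : ModuleCat.{u} R, PGFdLE R 0 M) ↔
      (∀ E : ModuleCat.{u} R, Module.Injective R E → Module.Projective R E) :=
  ⟨fun h E _ ↦ projective_of_injective_of_isPGF (h E), fun h M ↦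
    isPGF_of_forall_injective_projective M h⟩

end GorensteinPaper
end
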